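/- arXiv:1706.00173 — 3 statements merged into one kernel-verified Lean document; each statement's English description precedes it below -/
import Mathlib

section
/- The autonomous d₄P^(I) map preserves its quartic invariant: for all a, b, c, d, x, y, z, u, x₁ in ℂ with a·x·y ≠ 0, if a·x·y·x₁ = −a·y·(x² + y² + z² + 2yz + 2xy + xz + zu) − b·y·(x + y + z) − c·y + d, then Δ₄(x₁, x, y, z) = Δ₄(x, y, z, u). -/
/-- The quartic invariant `Δ₄` of the autonomous `d₄P^(I)` map, in affine coordinates. -/
noncomputable def Δ₄ (a b c d x y z u : ℂ) : ℂ :=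
  a * y * z * (-y^2 - 2*y*z - x*y - z^2 - z*u + x*u) - b * y * z * (y + z)
    - c * y * z + d * (y + z)

/-- The autonomous `d₄P^(I)` map preserves its quartic invariant `Δ₄`. -/
theorem d4PI_preserves_Delta4 (a b c d x y z u x₁ : ℂ) (h : a * x * y ≠ 0)
    (hrec : a * x * y * x₁ =
      -a * y * (x^2 + y^2 + z^2 + 2*y*z + 2*x*y + x*z + z*u)
        - b * y * (x + y + z) - c * y + d) :
    Δ₄ a b c d x₁ x y z = Δ₄ a b c d x y z u := by
  unfold Δ₄
  linear_combination (z - x) * hrec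
end

section
/- The autonomous d₄P^(II) map preserves its degree-six invariant: for all a, b, c, d, x, y, z, u, x₁ in ℂ with a·(1 − y²)·(1 − x²) ≠ 0, if a·(1 − y²)·(1 − x²)·x₁ = d − a·(1 − y²)·(u − y·z² − u·z² − 2xyz − x²·y) − c·y − b·(1 − y²)·(z + x), then Δ₆(x₁, x, y, z) = Δ₆(x, y, z, u). -/
/-- The degree-six invariant `Δ₆` of the autonomous `d₄P^(II)` map, in affine coordinates. -/
noncomputable def Δ₆ (a b c d x y z u : ℂ) : ℂ :=
  a * (1 - z^2) * (1 - y^2) * (u*x - u*z - x*y - y*z)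
    - b * (z^2 + y^2 - z^2*y^2) - c * y * z + d * (z + y)

/-- The autonomous `d₄P^(II)` map preserves its degree-six invariant `Δ₆`. -/
theorem d4PII_preserves_Delta6 (a b c d x y z u x₁ : ℂ)
    (h : a * (1 - y^2) * (1 - x^2) ≠ 0)
    (hrec : a * (1 - y^2) * (1 - x^2) * x₁ =
      d - a * (1 - y^2) * (u - y*z^2 - u*z^2 - 2*x*y*z - x^2*y)
        - c * y - b * (1 - y^2) * (z + x)) :
    Δ₆ a b c d x₁ x y z = Δ₆ a b c d x y z u := by
  unfold Δ₆; linear_combination (z - x) * hrec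
end

section
/- The shadow map of the autonomous d₄P^(II) map possesses three independent rational invariants: for all x, y, z, u, x₁ in ℂ with 1 − x² ≠ 0, if (1 − x²)·x₁ = x²·y − y·z² − u·z² + u, then Σ₃(x₁, x, y, z) = Σ₃(x, y, z, u), Σ₄(x₁, x, y, z) = Σ₄(x, y, z, u), and Σ₆(x₁, x, y, z) = Σ₆(x, y, z, u). -/
/-- First invariant `Σ₃` of the shadow map `φ_s^(II)`. -/
noncomputable def Sigma₃ (x y z u : ℂ) : ℂ :=
  x*y^2 + z*y^2 + u*z^2 + y*z^2 - (x + y + z + u)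

/-- Second invariant `Σ₄` of the shadow map `φ_s^(II)`. -/
noncomputable def Sigma₄ (x y z u : ℂ) : ℂ :=
  z*x + u*y - y*z*(u*z + x*y + y*z)

/-- Third invariant `Σ₆` of the shadow map `φ_s^(II)`. -/
noncomputable def Sigma₆ (x y z u : ℂ) : ℂ :=
  (1 - z^2) * (1 - y^2) * (z + x) * (u + y)

/-- The shadow map `φ_s^(II)` of the autonomous `d₄P^(II)` map possesses the three
independent rational invariants `Σ₃`, `Σ₄`, `Σ₆`. -/
theorem d4PII_shadow_three_invariants (x y z u x₁ : ℂ) (h : 1 - x^2 ≠ 0)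
    (hrec : (1 - x^2) * x₁ = x^2*y - y*z^2 - u*z^2 + u) :
    Sigma₃ x₁ x y z = Sigma₃ x y z u ∧
    Sigma₄ x₁ x y z = Sigma₄ x y z u ∧
    Sigma₆ x₁ x y z = Sigma₆ x y z u := by
  have hx : x₁ = (x^2*y - y*z^2 - u*z^2 + u) / (1 - x^2) := by
    field_simp
    linear_combination hrec
  subst hx
  refine ⟨?_, ?_, ?_⟩ <;> simp only [Sigma₃, Sigma₄, Sigma₆] <;> field_simp <;> ring
end
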